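/- Let Δ' ⊂ ℝ³ be the convex hull of the eight points (1,0,−1), (0,−1,−1), (−1,−1,−1), (−1,2,−1), (1,2,−1), (1,0,1), (0,−1,2), (−1,−1,2). Then Δ' contains the origin in its interior and its polar dual (Δ')* equals the convex hull of the six integer points (0,0,1), (−1,0,0), (−1,1,0), (0,1,0), (1,0,0), (0,−1,−1); in particular Δ' is a reflexive polytope. -/

import Mathlib

/-!
The vertices of Δ' have centroid `0`, so perturbing the uniform weights `1/8` linearly in `x`
writes every small `x` as a convex combination of them; hence `0` is interior.

The polar dual of a convex hull is cut out by the vertices alone, so `(Δ')*` is the polyhedron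
given by the eight inequalities `⟨y, v⟩ ≥ -1`. Each of the six integer points satisfies them, which
gives one inclusion; for the other, the hull of the six points is triangulated into three simplices
sharing the edge from `(0,0,1)` to `(0,-1,-1)`, and on each simplex the barycentric coordinates
of `y` are affine combinations of the eight inequalities.
-/

section PolarDual

variable {𝕜 ι : Type*} [Field 𝕜] [LinearOrder 𝕜] [IsStrictOrderedRing 𝕜] [Fintype ι]

def polarDual (s : Set (ι → 𝕜)) : Set (ι → 𝕜) :=
  {y | ∀ x ∈ s, -1 ≤ y ⬝ᵥ x}

theorem convex_setOf_neg_one_le_dotProduct (x : ι → 𝕜) : Convex 𝕜 {y : ι → 𝕜 | -1 ≤ y ⬝ᵥ x} :=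
  convex_halfSpace_ge ⟨fun u v => add_dotProduct u v x, fun c u => smul_dotProduct c u x⟩ (-1)

theorem convex_polarDual (s : Set (ι → 𝕜)) : Convex 𝕜 (polarDual s) := by
  have : polarDual s = ⋂ x ∈ s, {y : ι → 𝕜 | -1 ≤ y ⬝ᵥ x} := by
    ext y; simp [polarDual]
  rw [this]
  exact convex_iInter₂ fun x _ => convex_setOf_neg_one_le_dotProduct x

theorem polarDual_convexHull (s : Set (ι → 𝕜)) : polarDual (convexHull 𝕜 s) = polarDual s := by
  refine Set.Subset.antisymm (fun y hy x hx => hy x (subset_convexHull 𝕜 s hx)) fun y hy => ?_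
  refine convexHull_min (t := {x | -1 ≤ y ⬝ᵥ x}) hy ?_
  simpa only [dotProduct_comm y] using convex_setOf_neg_one_le_dotProduct y

theorem mem_convexHull_of_eq_sum {E : Type*} [AddCommGroup E] [Module 𝕜 E] {s : Set E}
    {z : ι → E} (hz : ∀ i, z i ∈ s) {w : ι → 𝕜} (hw₀ : ∀ i, 0 ≤ w i) (hw₁ : ∑ i, w i = 1)
    {y : E} (hy : y = ∑ i, w i • z i) : y ∈ convexHull 𝕜 s :=
  hy ▸ (convex_convexHull 𝕜 s).sum_mem (fun i _ => hw₀ i) hw₁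
    fun i _ => subset_convexHull 𝕜 s (hz i)

end PolarDual

namespace U10

def vertices : Set (Fin 3 → ℝ) :=
  {![1,0,-1], ![0,-1,-1], ![-1,-1,-1], ![-1,2,-1], ![1,2,-1], ![1,0,1], ![0,-1,2], ![-1,-1,2]}

def dualVertices : Set (Fin 3 → ℝ) :=
  {![0,0,1], ![-1,0,0], ![-1,1,0], ![0,1,0], ![1,0,0], ![0,-1,-1]}

theorem ball_subset_convexHull_vertices : Metric.ball 0 (1 / 8) ⊆ convexHull ℝ vertices := by
  intro x hx
  have hx : ∀ i, |x i| < 1 / 8 := fun i => by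
    simpa [Real.dist_eq] using (dist_pi_lt_iff (by norm_num)).mp (Metric.mem_ball.mp hx) i
  obtain ⟨h0, h0'⟩ := abs_lt.mp (hx 0)
  obtain ⟨h1, h1'⟩ := abs_lt.mp (hx 1)
  obtain ⟨h2, h2'⟩ := abs_lt.mp (hx 2)
  refine mem_convexHull_of_eq_sum
    (z := ![![1,0,-1], ![0,-1,-1], ![-1,-1,-1], ![-1,2,-1], ![1,2,-1], ![1,0,1], ![0,-1,2],
      ![-1,-1,2]])
    (w := ![1/8, 1/8 - x 2/3, 1/8 - x 1/3, 1/8 - x 0/2 + x 1/3, 1/8 + x 0/2, 1/8, 1/8 + x 2/3,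
      1/8])
    (fun i => by fin_cases i <;> simp [vertices])
    (fun i => by fin_cases i <;> simp <;> linarith)
    (by simp [Fin.sum_univ_eight]; ring) ?_
  ext j; fin_cases j <;> simp [Fin.sum_univ_eight] <;> ring

theorem zero_mem_interior_convexHull_vertices : (0 : Fin 3 → ℝ) ∈ interior (convexHull ℝ vertices) :=
  mem_interior.mpr ⟨_, ball_subset_convexHull_vertices, Metric.isOpen_ball,
    Metric.mem_ball_self (by norm_num)⟩

theorem dualVertices_subset_polarDual_vertices : dualVertices ⊆ polarDual vertices := by
  intro w hw v hv
  simp only [dualVertices, vertices, Set.mem_insert_iff, Set.mem_singleton_iff] at hw hv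
  rcases hw with rfl | rfl | rfl | rfl | rfl | rfl <;>
    rcases hv with rfl | rfl | rfl | rfl | rfl | rfl | rfl | rfl <;>
    norm_num [dotProduct, Fin.sum_univ_three, Matrix.cons_val_two, Matrix.head_cons, Matrix.tail_cons]

theorem polarDual_vertices_subset_convexHull : polarDual vertices ⊆ convexHull ℝ dualVertices := by
  intro y hy
  simp only [polarDual, vertices, Set.mem_insert_iff, Set.mem_singleton_iff, forall_eq_or_imp,
    forall_eq, dotProduct, Fin.sum_univ_three, Matrix.cons_val_zero,
    Matrix.cons_val_one, Matrix.cons_val_two, Matrix.head_cons, Matrix.tail_cons] at hy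
  obtain ⟨g1, g2, g3, g4, g5, g6, g7, g8⟩ := hy
  rcases le_total 0 (y 0) with hc | hc
  · refine mem_convexHull_of_eq_sum (z := ![![0,0,1], ![0,1,0], ![1,0,0], ![0,-1,-1]])
      (w := ![(1 - y 0 - y 1 + 2 * y 2) / 3, (1 - y 0 + 2 * y 1 - y 2) / 3, y 0,
        (1 - y 0 - y 1 - y 2) / 3])
      (fun i => by fin_cases i <;> simp [dualVertices])
      (fun i => by fin_cases i <;> simp <;> linarith)
      (by simp [Fin.sum_univ_four]; ring) ?_
    ext j; fin_cases j <;> simp [Fin.sum_univ_four] <;> ring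
  rcases le_total 0 (3 * y 0 + 2 * y 1 - y 2 + 1) with hd | hd
  · refine mem_convexHull_of_eq_sum (z := ![![0,0,1], ![-1,1,0], ![0,1,0], ![0,-1,-1]])
      (w := ![(1 - y 1 + 2 * y 2) / 3, -y 0, (1 + 3 * y 0 + 2 * y 1 - y 2) / 3,
        (1 - y 1 - y 2) / 3])
      (fun i => by fin_cases i <;> simp [dualVertices])
      (fun i => by fin_cases i <;> simp <;> linarith)
      (by simp [Fin.sum_univ_four]; ring) ?_
    ext j; fin_cases j <;> simp [Fin.sum_univ_four] <;> ring
  · refine mem_convexHull_of_eq_sum (z := ![![0,0,1], ![-1,0,0], ![-1,1,0], ![0,-1,-1]])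
      (w := ![(1 + y 0 + y 2) / 2, (-1 - 3 * y 0 - 2 * y 1 + y 2) / 2,
        (1 + y 0 + 2 * y 1 - y 2) / 2, (1 + y 0 - y 2) / 2])
      (fun i => by fin_cases i <;> simp [dualVertices])
      (fun i => by fin_cases i <;> simp <;> linarith)
      (by simp [Fin.sum_univ_four]; ring) ?_
    ext j; fin_cases j <;> simp [Fin.sum_univ_four] <;> ring

theorem polarDual_convexHull_vertices :
    polarDual (convexHull ℝ vertices) = convexHull ℝ dualVertices := by
  rw [polarDual_convexHull]
  exact polarDual_vertices_subset_convexHull.antisymm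
    (convexHull_min dualVertices_subset_polarDual_vertices (convex_polarDual vertices))

end U10

/-- The polytope Δ' contains the origin in its interior and its polar dual
is the convex hull of the listed integer points; in particular Δ' is reflexive. -/
theorem stmt_5 :
    let Δ' : Set (Fin 3 → ℝ) := convexHull ℝ ({![1,0,-1], ![0,-1,-1], ![-1,-1,-1], ![-1,2,-1], ![1,2,-1], ![1,0,1], ![0,-1,2], ![-1,-1,2]} : Set (Fin 3 → ℝ))
    (0 : Fin 3 → ℝ) ∈ interior Δ' ∧
    {y : Fin 3 → ℝ | ∀ x ∈ Δ', -1 ≤ ∑ i, y i * x i} =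
      convexHull ℝ ({![0,0,1], ![-1,0,0], ![-1,1,0], ![0,1,0], ![1,0,0], ![0,-1,-1]} : Set (Fin 3 → ℝ)) :=
  ⟨U10.zero_mem_interior_convexHull_vertices, U10.polarDual_convexHull_vertices⟩
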